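/- Let G be a finite simple graph, let γ be an automorphism of G, and let u ≠ u' be two vertices fixed by γ. Let P be a path from u to u' of minimal length (a shortest u–u' path). If no internal vertex of P is fixed by γ, then P and its image path γ(P) share no vertices other than u and u'. -/

import Mathlib

open SimpleGraph

/-- The permutation `γ` is an automorphism of the graph `G`. -/
def IsGraphAutomorphism {V : Type*} (G : SimpleGraph V) (γ : Equiv.Perm V) : Prop :=
  ∀ u v : V, G.Adj (γ u) (γ v) ↔ G.Adj u v

/-- The graph homomorphism `G →g G` induced by an adjacency-preserving permutation. -/
def permHom {V : Type*} (G : SimpleGraph V) (γ : Equiv.Perm V)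
    (hγ : IsGraphAutomorphism G γ) : G →g G :=
  ⟨γ, fun h => (hγ _ _).mpr h⟩

/-! On a shortest `u`–`u'` path every vertex `w` sits at position `dist u w`. The image `γ(P)` is
again a shortest `u`–`u'` path, so a common vertex `w` is both the vertex at position `dist u w`
of `P` and of `γ(P)`; the latter is `γ` of the former, whence `γ w = w`. -/

namespace SimpleGraph

variable {V : Type*} {G : SimpleGraph V} {u v w : V}

theorem Path.length_eq_dist_of_forall_length_le {P : G.Path u v}
    (hmin : ∀ Q : G.Path u v, P.val.length ≤ Q.val.length) : P.val.length = G.dist u v := by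
  obtain ⟨p, hp, hlen⟩ := P.val.reachable.exists_path_of_dist
  exact le_antisymm (hlen ▸ hmin ⟨p, hp⟩) (dist_le _)

theorem Walk.getVert_dist_of_length_eq_dist {p : G.Walk u v} (hp : p.length = G.dist u v)
    (hw : w ∈ p.support) : p.getVert (G.dist u w) = w := by
  classical
  rw [← length_eq_dist_of_subwalk hp (p.isSubwalk_takeUntil hw)]
  exact p.getVert_length_takeUntil hw

end SimpleGraph

theorem stmt9_general {V : Type*} (G : SimpleGraph V)
    (γ : Equiv.Perm V) (hγ : IsGraphAutomorphism G γ)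
    (u u' : V) (hu : γ u = u) (hu' : γ u' = u')
    (P : G.Path u u')
    (hmin : ∀ Q : G.Path u u', P.val.length ≤ Q.val.length)
    (hfix : ∀ w ∈ P.val.support, w ≠ u → w ≠ u' → γ w ≠ w) :
    ∀ w ∈ P.val.support, w ∈ ((P.val.map (permHom G γ hγ)).support) →
      w = u ∨ w = u' := by
  intro w hwP hwγP
  set f := permHom G γ hγ
  have hfu : f u = u := hu
  have hfu' : f u' = u' := hu'
  have hP := Path.length_eq_dist_of_forall_length_le hmin
  have hγP : (P.val.map f).length = G.dist (f u) (f u') := by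
    rw [Walk.length_map, hfu, hfu', hP]
  have hw_fixed : γ w = w :=
    calc γ w = f (P.val.getVert (G.dist u w)) := by
          rw [Walk.getVert_dist_of_length_eq_dist hP hwP]; rfl
      _ = (P.val.map f).getVert (G.dist (f u) w) := by rw [Walk.getVert_map, hfu]
      _ = w := Walk.getVert_dist_of_length_eq_dist hγP hwγP
  by_contra! hw
  exact hfix w hwP hw.1 hw.2 hw_fixed

theorem stmt9 {V : Type*} [Fintype V] (G : SimpleGraph V)
    (γ : Equiv.Perm V) (hγ : IsGraphAutomorphism G γ)
    (u u' : V) (hne : u ≠ u') (hu : γ u = u) (hu' : γ u' = u')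
    (P : G.Path u u')
    (hmin : ∀ Q : G.Path u u', P.val.length ≤ Q.val.length)
    (hfix : ∀ w ∈ P.val.support, w ≠ u → w ≠ u' → γ w ≠ w) :
    ∀ w ∈ P.val.support, w ∈ ((P.val.map (permHom G γ hγ)).support) →
      w = u ∨ w = u' :=
  stmt9_general G γ hγ u u' hu hu' P hmin hfix
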